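/- arXiv:1701.08330 — 4 statements merged into one kernel-verified Lean document; each statement's English description precedes it below -/
import Mathlib

section
/- If π R† π' for the lifting of a relation R on a countable set T, then for every decomposition π = ∑_{i∈I} r_i π_i into a countable convex combination of distributions (r_i ∈ (0,1], ∑ r_i = 1), there exist distributions π'_i with π' = ∑_{i∈I} r_i π'_i such that for every s ∈ supp(π_i) there exists t ∈ supp(π'_i) with s R t. -/
open scoped ENNReal Classical

/-- The Dirac distribution at `t`. -/
noncomputable def dirac {T : Type*} (t : T) : T → ℝ≥0∞ :=
  fun s => if s = t then 1 else 0

/-- The lifting of a relation `R ⊆ T × T` to probability distributions on `T`: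
`π R† π'` iff there are a countable index set `I`, weights `p i ∈ (0,1]` summing to `1`,
and elements `s i, t i` with `R (s i) (t i)` for all `i`, such that
`π = ∑ i, p i • δ_{s i}` and `π' = ∑ i, p i • δ_{t i}`. -/
def Lift {T : Type*} (R : T → T → Prop) (π π' : T → ℝ≥0∞) : Prop :=
  ∃ (I : Type) (_ : Countable I) (p : I → ℝ≥0∞) (s t : I → T),
    (∀ i, 0 < p i ∧ p i ≤ 1) ∧ (∑' i, p i = 1) ∧ (∀ i, R (s i) (t i)) ∧
    (∀ u, π u = ∑' i, p i * dirac (s i) u) ∧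
    (∀ u, π' u = ∑' i, p i * dirac (t i) u)

/-!
The witnesses of `π R† π'` define a coupling `ω u v = ∑ j, p j δ_{s j}(u) δ_{t j}(v)`
of `π` and `π'` that charges only pairs in `R`. Conditioning `ω` on its first coordinate gives
a kernel `u ↦ ω u · / π u`, and pushing each piece `π i` (which is absolutely continuous
with respect to `π`) through this kernel yields `π' i`. Linearity of the push turns
`π = ∑ r i π i` into `π' = ∑ r i π' i`, and a state `s` charged by `π i` is sent to some `t`
with `ω s t ≠ 0`, hence `R s t`.
-/

section Dirac

variable {T : Type*}

lemma dirac_le_one (x u : T) : dirac x u ≤ 1 := by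
  unfold dirac; split <;> simp

lemma dirac_ne_zero_iff {x u : T} : dirac x u ≠ 0 ↔ u = x := by
  unfold dirac; split <;> simp [*]

lemma tsum_dirac (x : T) : ∑' u, dirac x u = 1 := by
  simp [dirac, tsum_ite_eq]

end Dirac

structure IsCoupling {α β : Type*} (R : α → β → Prop) (ω : α → β → ℝ≥0∞)
    (π : α → ℝ≥0∞) (π' : β → ℝ≥0∞) : Prop where
  tsum_right : ∀ u, ∑' v, ω u v = π u
  tsum_left : ∀ v, ∑' u, ω u v = π' v
  rel_of_ne_zero : ∀ u v, ω u v ≠ 0 → R u v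

-- `ω u v / π u` is junk where `π u = 0`; it is only ever weighted by `μ u` with `μ ≪ π`.
noncomputable def couplingMap {α β : Type*} (ω : α → β → ℝ≥0∞) (π : α → ℝ≥0∞)
    (μ : α → ℝ≥0∞) (v : β) : ℝ≥0∞ :=
  ∑' u, μ u * (ω u v / π u)

lemma tsum_mul_couplingMap {ι α β : Type*} (ω : α → β → ℝ≥0∞) (π : α → ℝ≥0∞)
    (r : ι → ℝ≥0∞) (μ : ι → α → ℝ≥0∞) (v : β) :
    ∑' i, r i * couplingMap ω π (μ i) v = couplingMap ω π (fun u => ∑' i, r i * μ i u) v := by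
  simp only [couplingMap, ← ENNReal.tsum_mul_left, ← ENNReal.tsum_mul_right, mul_assoc]
  exact ENNReal.tsum_comm

namespace IsCoupling

variable {α β : Type*} {R : α → β → Prop} {ω : α → β → ℝ≥0∞} {π : α → ℝ≥0∞}
  {π' : β → ℝ≥0∞}

lemma le_left (hω : IsCoupling R ω π π') (u : α) (v : β) : ω u v ≤ π u :=
  hω.tsum_right u ▸ ENNReal.le_tsum v

lemma tsum_div_left (hω : IsCoupling R ω π π') {u : α} (h0 : π u ≠ 0) (htop : π u ≠ ∞) :
    ∑' v, ω u v / π u = 1 := by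
  simp only [div_eq_mul_inv]
  rw [ENNReal.tsum_mul_right, hω.tsum_right, ENNReal.mul_inv_cancel h0 htop]

lemma tsum_couplingMap (hω : IsCoupling R ω π π') (hπ : ∀ u, π u ≠ ∞) {μ : α → ℝ≥0∞}
    (hμ : ∀ u, μ u ≠ 0 → π u ≠ 0) : ∑' v, couplingMap ω π μ v = ∑' u, μ u := by
  unfold couplingMap
  rw [ENNReal.tsum_comm]
  refine tsum_congr fun u => ?_
  rw [ENNReal.tsum_mul_left]
  by_cases hu : μ u = 0
  · simp [hu]
  · rw [hω.tsum_div_left (hμ u hu) (hπ u), mul_one]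

lemma couplingMap_self (hω : IsCoupling R ω π π') (hπ : ∀ u, π u ≠ ∞) (v : β) :
    couplingMap ω π π v = π' v := by
  rw [couplingMap, ← hω.tsum_left v]
  refine tsum_congr fun u => ENNReal.mul_div_cancel' (fun h0 => ?_) (fun h => absurd h (hπ u))
  exact le_antisymm (h0 ▸ hω.le_left u v) bot_le

lemma exists_rel_of_ne_zero (hω : IsCoupling R ω π π') (hπ : ∀ u, π u ≠ ∞) {μ : α → ℝ≥0∞}
    {s : α} (hμs : μ s ≠ 0) (hπs : π s ≠ 0) : ∃ t, couplingMap ω π μ t ≠ 0 ∧ R s t := by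
  obtain ⟨t, hst⟩ : ∃ t, ω s t ≠ 0 := by
    rw [← hω.tsum_right s, Ne, ENNReal.tsum_eq_zero, not_forall] at hπs
    exact hπs
  refine ⟨t, ?_, hω.rel_of_ne_zero s t hst⟩
  rw [couplingMap, Ne, ENNReal.tsum_eq_zero, not_forall]
  exact ⟨s, mul_ne_zero hμs (ENNReal.div_pos_iff.2 ⟨hst, hπ s⟩).ne'⟩

end IsCoupling

noncomputable def diracCoupling {ι T : Type*} (p : ι → ℝ≥0∞) (s t : ι → T) (u v : T) : ℝ≥0∞ :=
  ∑' j, p j * dirac (s j) u * dirac (t j) v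

namespace Lift

variable {T : Type*} {R : T → T → Prop} {π π' : T → ℝ≥0∞}

lemma ne_top (h : Lift R π π') (u : T) : π u ≠ ∞ := by
  obtain ⟨I, _, p, s, t, -, hpsum, -, hπ, -⟩ := h
  refine ne_top_of_le_ne_top ENNReal.one_ne_top ?_
  calc π u = ∑' j, p j * dirac (s j) u := hπ u
    _ ≤ ∑' j, p j := ENNReal.tsum_le_tsum fun j => mul_le_of_le_one_right' (dirac_le_one _ _)
    _ = 1 := hpsum

lemma exists_isCoupling (h : Lift R π π') : ∃ ω, IsCoupling R ω π π' := by
  obtain ⟨I, _, p, s, t, -, -, hR, hπ, hπ'⟩ := h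
  refine ⟨diracCoupling p s t, fun u => ?_, fun v => ?_, fun u v huv => ?_⟩
  · unfold diracCoupling
    rw [ENNReal.tsum_comm, hπ]
    simp only [ENNReal.tsum_mul_left, tsum_dirac, mul_one]
  · unfold diracCoupling
    rw [ENNReal.tsum_comm, hπ']
    simp only [mul_right_comm _ (dirac (s _) _), ENNReal.tsum_mul_left, tsum_dirac, mul_one]
  · obtain ⟨j, hj⟩ := not_forall.1 (mt ENNReal.tsum_eq_zero.2 huv)
    obtain ⟨hps, ht⟩ := mul_ne_zero_iff.1 hj
    obtain ⟨-, hs⟩ := mul_ne_zero_iff.1 hps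
    rw [dirac_ne_zero_iff.1 hs, dirac_ne_zero_iff.1 ht]
    exact hR j

end Lift

theorem lift_decomposition_general {T : Type*} (R : T → T → Prop)
    (π π' : T → ℝ≥0∞) (h : Lift R π π')
    (I : Type) (r : I → ℝ≥0∞) (πs : I → T → ℝ≥0∞)
    (hr : ∀ i, 0 < r i ∧ r i ≤ 1)
    (hdist : ∀ i, ∑' t, πs i t = 1)
    (hdec : ∀ u, π u = ∑' i, r i * πs i u) :
    ∃ πs' : I → T → ℝ≥0∞,
      (∀ i, ∑' t, πs' i t = 1) ∧
      (∀ u, π' u = ∑' i, r i * πs' i u) ∧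
      (∀ i, ∀ s : T, πs i s ≠ 0 → ∃ t : T, πs' i t ≠ 0 ∧ R s t) := by
  obtain ⟨ω, hω⟩ := h.exists_isCoupling
  have hπ : ∀ u, π u ≠ ∞ := h.ne_top
  have hac : ∀ i u, πs i u ≠ 0 → π u ≠ 0 := fun i u hu => by
    rw [hdec, Ne, ENNReal.tsum_eq_zero, not_forall]
    exact ⟨i, mul_ne_zero (hr i).1.ne' hu⟩
  have hπ_eq : (fun u => ∑' i, r i * πs i u) = π := (funext hdec).symm
  refine ⟨fun i => couplingMap ω π (πs i), fun i => ?_, fun v => ?_, fun i s hs => ?_⟩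
  · rw [hω.tsum_couplingMap hπ (hac i), hdist i]
  · rw [tsum_mul_couplingMap, hπ_eq, hω.couplingMap_self hπ]
  · exact hω.exists_rel_of_ne_zero hπ hs (hac i s hs)

/-- If `π R† π'`, then every countable convex decomposition `π = ∑ i, r i • π i` of `π`
can be matched by a decomposition `π' = ∑ i, r i • π' i` of `π'` such that every state in
the support of `π i` is related by `R` to some state in the support of `π' i`. -/
theorem lift_decomposition {T : Type*} [Countable T] (R : T → T → Prop)
    (π π' : T → ℝ≥0∞) (h : Lift R π π')
    (I : Type) [Countable I] (r : I → ℝ≥0∞) (πs : I → T → ℝ≥0∞)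
    (hr : ∀ i, 0 < r i ∧ r i ≤ 1) (hrsum : ∑' i, r i = 1)
    (hdist : ∀ i, ∑' t, πs i t = 1)
    (hdec : ∀ u, π u = ∑' i, r i * πs i u) :
    ∃ πs' : I → T → ℝ≥0∞,
      (∀ i, ∑' t, πs' i t = 1) ∧
      (∀ u, π' u = ∑' i, r i * πs' i u) ∧
      (∀ i, ∀ s : T, πs i s ≠ 0 → ∃ t : T, πs' i t ≠ 0 ∧ R s t) :=
  lift_decomposition_general R π π' h I r πs hr hdist hdec
end

section
/- If two states s and t of a PTS are related by probabilistic ready similarity (s ⊑_RS t), then every ready formula φ of the logic L^r satisfied by s is also satisfied by t. Ready formulae are generated by: φ ::= ⊤ | ā | ⋀_{j∈J} φ_j | ⟨a⟩ψ and ψ ::= ⊕_{i∈I} r_i φ_i, where s ⊨ ā iff s cannot perform action a, s ⊨ ⟨a⟩ψ iff s →a π for some π with π ⊨ ψ, and π ⊨ ⊕_i r_i φ_i iff π = ∑_i r_i π_i for distributions π_i with every state in supp(π_i) satisfying φ_i. -/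
open scoped ENNReal Classical

/-- A nondeterministic probabilistic labeled transition system (PTS). -/
structure PTS (T : Type*) (Act : Type*) where
  trans : T → Act → (T → ℝ≥0∞) → Prop
  trans_isDist : ∀ t a π, trans t a π → ∑' s, π s = 1

/-- `R` is a probabilistic simulation. -/
def IsSimulation {T Act : Type*} (P : PTS T Act) (R : T → T → Prop) : Prop :=
  ∀ s t : T, R s t → ∀ (a : Act) (πs : T → ℝ≥0∞), P.trans s a πs →
    ∃ πt : T → ℝ≥0∞, P.trans t a πt ∧ Lift R πs πt

/-- `R` is a probabilistic ready simulation: a probabilistic simulation which moreover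
reflects the inability to perform actions. -/
def IsReadySimulation {T Act : Type*} (P : PTS T Act) (R : T → T → Prop) : Prop :=
  IsSimulation P R ∧
    ∀ s t : T, R s t → ∀ a : Act, (∀ π, ¬ P.trans s a π) → (∀ π, ¬ P.trans t a π)

/-- Probabilistic ready similarity: the union of all probabilistic ready simulations. -/
def ReadySim {T Act : Type*} (P : PTS T Act) (s t : T) : Prop :=
  ∃ R : T → T → Prop, IsReadySimulation P R ∧ R s t

/-- Ready formulae of the logic `L^r`: state formulae (index `true`) are
`⊤ | ā | ⋀_{j∈J} φ_j | ⟨a⟩ψ`, distribution formulae (index `false`) are `⊕_{i∈I} r_i φ_i`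
with `r_i ∈ (0,1]` summing to `1`; index sets are at most countable and nonempty. -/
inductive RF (Act : Type) : Bool → Type 1 where
  | top : RF Act true
  | bar (a : Act) : RF Act true
  | conj (J : Type) (hC : Countable J) (hN : Nonempty J) (φs : J → RF Act true) : RF Act true
  | diam (a : Act) (ψ : RF Act false) : RF Act true
  | osum (I : Type) (hC : Countable I) (hN : Nonempty I) (r : I → ℝ≥0∞)
      (hr : ∀ i, 0 < r i ∧ r i ≤ 1) (hsum : ∑' i, r i = 1)
      (φs : I → RF Act true) : RF Act false

/-- Semantic domain: state formulae denote sets of states, distribution formulae denote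
sets of distributions. -/
abbrev SemTy (T : Type*) : Bool → Type _
  | true => Set T
  | false => Set (T → ℝ≥0∞)

/-- Satisfaction semantics of `L^r`. -/
noncomputable def sem {T : Type*} {Act : Type} (P : PTS T Act) :
    {b : Bool} → RF Act b → SemTy T b
  | _, RF.top => (Set.univ : Set T)
  | _, RF.bar a => {t : T | ∀ π, ¬ P.trans t a π}
  | _, RF.conj _ _ _ φs => ⋂ j, sem P (φs j)
  | _, RF.diam a ψ => {t : T | ∃ π, P.trans t a π ∧ π ∈ sem P ψ}
  | _, RF.osum I _ _ r _ _ φs =>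
      {π : T → ℝ≥0∞ | ∃ πs : I → T → ℝ≥0∞,
        (∀ i, ∑' t, πs i t = 1) ∧
        (∀ u, π u = ∑' i, r i * πs i u) ∧
        (∀ i, ∀ t : T, πs i t ≠ 0 → t ∈ sem P (φs i))}

/-!
Fix a ready simulation `R` and show by induction on formulae that `R`-related states satisfy the
same state formulae and `Lift R`-related distributions the same distribution formulae. The only
nontrivial case is `⊕ r_i φ_i`. Write the lifting as a coupling `∑ p_j δ(u_j, v_j)` of `π` and
`π'`, and let `π = ∑ r_i π_i`. Split each weight `p_j` among the summands in proportion to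
`r_i π_i(u_j)`; carrying the resulting weights over to the points `v_j` gives `π' = ∑ r_i π'_i`,
where every `v_j` in the support of `π'_i` is `R`-related to a `u_j` in the support of `π_i`.
-/

section

variable {T : Type*}

theorem tsum_mul_dirac (g : T → ℝ≥0∞) (t : T) : ∑' w, g w * dirac t w = g t := by
  simp [dirac]

theorem tsum_mul_tsum_mul_dirac {J : Type*} (f : J → ℝ≥0∞) (v : J → T) (g : T → ℝ≥0∞) :
    ∑' w, g w * ∑' j, f j * dirac (v j) w = ∑' j, f j * g (v j) := by
  simp_rw [← ENNReal.tsum_mul_left]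
  rw [ENNReal.tsum_comm]
  refine tsum_congr fun j => ?_
  simp_rw [mul_left_comm (g _), ENNReal.tsum_mul_left, tsum_mul_dirac]

theorem exists_split_weights {J I : Type*} {π : T → ℝ≥0∞} {p : J → ℝ≥0∞} {u : J → T}
    (hp : ∀ j, p j ≠ 0) (hp_sum : ∑' j, p j = 1) (hπu : ∀ w, π w = ∑' j, p j * dirac (u j) w)
    {r : I → ℝ≥0∞} (hr : ∀ i, r i ≠ 0) {πs : I → T → ℝ≥0∞} (hπs : ∀ i, ∑' w, πs i w = 1)
    (hπ : ∀ w, π w = ∑' i, r i * πs i w) :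
    ∃ ρ : I → J → ℝ≥0∞, (∀ i, ∑' j, ρ i j = 1) ∧ (∀ j, ∑' i, r i * ρ i j = p j) ∧
      ∀ i j, ρ i j ≠ 0 → πs i (u j) ≠ 0 := by
  have hπ_total : ∑' w, π w = 1 := by
    simpa [hπu, hp_sum] using tsum_mul_tsum_mul_dirac p u 1
  have hπ_ne_top (w : T) : π w ≠ ⊤ :=
    ne_top_of_le_ne_top ENNReal.one_ne_top (hπ_total ▸ ENNReal.le_tsum w)
  have hπu_ne_zero (j : J) : π (u j) ≠ 0 := by
    refine ne_bot_of_le_ne_bot (hp j) ?_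
    calc p j = p j * dirac (u j) (u j) := by simp [dirac]
      _ ≤ ∑' k, p k * dirac (u k) (u j) := ENNReal.le_tsum j
      _ = π (u j) := (hπu _).symm
  have hπs_zero (i : I) (w : T) (hw : π w = 0) : πs i w = 0 := by
    have := ENNReal.tsum_eq_zero.mp ((hπ w).symm.trans hw) i
    exact (mul_eq_zero.mp this).resolve_left (hr i)
  refine ⟨fun i j => p j * (πs i (u j) / π (u j)), fun i => ?_, fun j => ?_, fun i j h => ?_⟩
  · calc ∑' j, p j * (πs i (u j) / π (u j))
        = ∑' w, πs i w / π w * π w := by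
          simp_rw [hπu, tsum_mul_tsum_mul_dirac]
      _ = ∑' w, πs i w := by
          refine tsum_congr fun w => ?_
          by_cases hw : π w = 0
          · simp [hw, hπs_zero i w hw]
          · exact ENNReal.div_mul_cancel hw (hπ_ne_top w)
      _ = 1 := hπs i
  · calc ∑' i, r i * (p j * (πs i (u j) / π (u j)))
        = ∑' i, p j / π (u j) * (r i * πs i (u j)) :=
          tsum_congr fun i => by simp only [div_eq_mul_inv]; ring
      _ = p j / π (u j) * π (u j) := by rw [ENNReal.tsum_mul_left, hπ]
      _ = p j := ENNReal.div_mul_cancel (hπu_ne_zero j) (hπ_ne_top _)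
  · exact fun h0 => h (by simp [h0])

theorem Lift.exists_split {R : T → T → Prop} {π π' : T → ℝ≥0∞} (hL : Lift R π π') {I : Type*}
    {r : I → ℝ≥0∞} (hr : ∀ i, r i ≠ 0) {πs : I → T → ℝ≥0∞} (hπs : ∀ i, ∑' w, πs i w = 1)
    (hπ : ∀ w, π w = ∑' i, r i * πs i w) :
    ∃ πs' : I → T → ℝ≥0∞, (∀ i, ∑' w, πs' i w = 1) ∧ (∀ w, π' w = ∑' i, r i * πs' i w) ∧
      ∀ i w', πs' i w' ≠ 0 → ∃ w, πs i w ≠ 0 ∧ R w w' := by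
  obtain ⟨J, -, p, u, v, hp, hp_sum, huv, hπu, hπ'v⟩ := hL
  obtain ⟨ρ, hρ_sum, hρ_mix, hρ_supp⟩ :=
    exists_split_weights (fun j => (hp j).1.ne') hp_sum hπu hr hπs hπ
  refine ⟨fun i w => ∑' j, ρ i j * dirac (v j) w, fun i => ?_, fun w => ?_, fun i w' h => ?_⟩
  · simpa [hρ_sum] using tsum_mul_tsum_mul_dirac (ρ i) v 1
  · simp_rw [hπ'v, ← hρ_mix, ← ENNReal.tsum_mul_left, ← ENNReal.tsum_mul_right, mul_assoc]
    exact ENNReal.tsum_comm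
  · obtain ⟨j, hj⟩ : ∃ j, ρ i j * dirac (v j) w' ≠ 0 := by
      by_contra! hall
      exact h (ENNReal.tsum_eq_zero.mpr hall)
    obtain ⟨hρ, hdirac⟩ := mul_ne_zero_iff.mp hj
    obtain rfl : w' = v j := by by_contra hne; simp [dirac, hne] at hdirac
    exact ⟨u j, hρ_supp i j hρ, huv j⟩

variable {Act : Type} (P : PTS T Act) (R : T → T → Prop)

def RF.Transfers : {b : Bool} → RF Act b → Prop
  | true, φ => ∀ s t, R s t → s ∈ sem P φ → t ∈ sem P φ
  | false, ψ => ∀ π π', Lift R π π' → π ∈ sem P ψ → π' ∈ sem P ψ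

variable {P R}

theorem IsReadySimulation.transfers (hR : IsReadySimulation P R) :
    ∀ {b : Bool} (φ : RF Act b), RF.Transfers P R φ := by
  intro b φ
  induction φ with
  | top => exact fun _ _ _ _ => Set.mem_univ _
  | bar a => exact fun s t hst hs => hR.2 s t hst a hs
  | conj J _ _ φs ih =>
    exact fun s t hst hs => Set.mem_iInter.mpr fun j => ih j s t hst (Set.mem_iInter.mp hs j)
  | diam a ψ ih =>
    rintro s t hst ⟨π, hsπ, hπ⟩
    obtain ⟨π', htπ', hL⟩ := hR.1 s t hst a π hsπ
    exact ⟨π', htπ', ih π π' hL hπ⟩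
  | osum I _ _ r hr _ φs ih =>
    rintro π π' hL ⟨πs, hπs, hπ, hsupp⟩
    obtain ⟨πs', hπs', hπ', hsupp'⟩ := hL.exists_split (fun i => (hr i).1.ne') hπs hπ
    refine ⟨πs', hπs', hπ', fun i w' h => ?_⟩
    obtain ⟨w, hw, hww'⟩ := hsupp' i w' h
    exact ih i w w' hww' (hsupp i w hw)

end

theorem readySim_preserves_ready_formulae_general {T : Type*} {Act : Type}
    (P : PTS T Act) (s t : T) (h : ReadySim P s t) :
    ∀ φ : RF Act true, s ∈ sem P φ → t ∈ sem P φ := by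
  obtain ⟨R, hR, hst⟩ := h
  exact fun φ => hR.transfers φ s t hst

/-- If `s` is related to `t` by probabilistic ready similarity, then every ready formula
of `L^r` satisfied by `s` is also satisfied by `t`. -/
theorem readySim_preserves_ready_formulae {T : Type*} {Act : Type} [Countable T]
    (P : PTS T Act) (s t : T) (h : ReadySim P s t) :
    ∀ φ : RF Act true, s ∈ sem P φ → t ∈ sem P φ :=
  readySim_preserves_ready_formulae_general P s t h
end

section
/- If R is an equivalence relation on a countable set T, then for distributions π, π' on T: π R† π' if and only if for every equivalence class C of R, π(C) = π'(C), where π(C) = ∑_{t∈C} π(t). -/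
open scoped ENNReal Classical

/-!
If `π = ∑ pᵢ δ_{sᵢ}` and `π' = ∑ pᵢ δ_{tᵢ}` with `sᵢ R tᵢ`, then `sᵢ` and `tᵢ` lie in the same
class, so both distributions give each class the mass of the indices landing in it. Conversely,
if the class masses `m` agree, `g (u, v) = π u π' v / m u` for `u R v` (and `0` otherwise) is a
coupling of `π` and `π'` supported on `R`; its support is countable and indexes the required
mixture of Diracs.
-/

theorem tsum_mul_dirac_s16 {T : Type*} (f : T → ℝ≥0∞) (u : T) : ∑' a, f a * dirac a u = f u :=
  (tsum_eq_single u fun a ha => by simp [dirac, Ne.symm ha]).trans (by simp [dirac])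

theorem tsum_subtype_eq_tsum_ite {T : Type*} (C : T → Prop) (f : T → ℝ≥0∞) :
    ∑' t : {t // C t}, f t = ∑' t, if C t then f t else 0 :=
  (tsum_subtype {t | C t} f).trans (tsum_congr fun _ => Set.indicator_apply _ _ _)

theorem tsum_subtype_dirac {T : Type*} (C : T → Prop) (a : T) :
    ∑' t : {t // C t}, dirac a (t : T) = if C a then 1 else 0 := by
  rw [tsum_subtype_eq_tsum_ite, tsum_eq_single a fun t ht => by simp [dirac, ht]]
  simp [dirac]

theorem tsum_subtype_mixture {T I : Type*} (C : T → Prop) (p : I → ℝ≥0∞) (σ : I → T) :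
    ∑' t : {t // C t}, ∑' i, p i * dirac (σ i) (t : T) = ∑' i, if C (σ i) then p i else 0 := by
  rw [ENNReal.tsum_comm]
  refine tsum_congr fun i => ?_
  rw [ENNReal.tsum_mul_left, tsum_subtype_dirac]
  split_ifs <;> simp

theorem Lift.tsum_subtype_eq {T : Type*} {R : T → T → Prop} {π π' : T → ℝ≥0∞}
    (h : Lift R π π') (C : T → Prop) (hC : ∀ a b, R a b → (C a ↔ C b)) :
    ∑' t : {t // C t}, π t = ∑' t : {t // C t}, π' t := by
  obtain ⟨I, _, p, s, t, -, -, hst, hπ, hπ'⟩ := h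
  simp only [hπ, hπ', tsum_subtype_mixture, hC _ _ (hst _)]

theorem Lift.of_countable_index {T J : Type*} [Countable J] {R : T → T → Prop}
    {π π' : T → ℝ≥0∞} (p : J → ℝ≥0∞) (s t : J → T)
    (hp : ∀ i, 0 < p i ∧ p i ≤ 1) (hp1 : ∑' i, p i = 1) (hst : ∀ i, R (s i) (t i))
    (hπ : ∀ u, π u = ∑' i, p i * dirac (s i) u)
    (hπ' : ∀ u, π' u = ∑' i, p i * dirac (t i) u) : Lift R π π' := by
  obtain ⟨f, hf⟩ := countable_iff_exists_injective J |>.mp ‹_›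
  let e : J ≃ Set.range f := Equiv.ofInjective f hf
  refine ⟨Set.range f, inferInstance, p ∘ e.symm, s ∘ e.symm, t ∘ e.symm,
    fun i => hp _, ?_, fun i => hst _, fun u => ?_, fun u => ?_⟩
  · exact (e.symm.tsum_eq p).trans hp1
  · exact (hπ u).trans (e.symm.tsum_eq fun j => p j * dirac (s j) u).symm
  · exact (hπ' u).trans (e.symm.tsum_eq fun j => p j * dirac (t j) u).symm

theorem tsum_mul_dirac_fst {T : Type*} (g : T × T → ℝ≥0∞) (u : T) :
    ∑' x, g x * dirac x.1 u = ∑' v, g (u, v) := by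
  rw [ENNReal.tsum_prod (f := fun a v => g (a, v) * dirac a u)]
  simp only [ENNReal.tsum_mul_right, tsum_mul_dirac_s16]

theorem tsum_mul_dirac_snd {T : Type*} (g : T × T → ℝ≥0∞) (u : T) :
    ∑' x, g x * dirac x.2 u = ∑' a, g (a, u) := by
  rw [ENNReal.tsum_prod (f := fun a v => g (a, v) * dirac v u), ENNReal.tsum_comm]
  simp only [ENNReal.tsum_mul_right, tsum_mul_dirac_s16]

theorem Lift.of_coupling {T : Type*} [Countable T] {R : T → T → Prop} {π π' : T → ℝ≥0∞}
    (g : T × T → ℝ≥0∞) (hgR : ∀ x, g x ≠ 0 → R x.1 x.2)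
    (hfst : ∀ u, ∑' v, g (u, v) = π u) (hsnd : ∀ v, ∑' u, g (u, v) = π' v)
    (hπ : ∑' u, π u = 1) : Lift R π π' := by
  have hg1 : ∑' x, g x = 1 := by
    rw [ENNReal.tsum_prod (f := fun u v => g (u, v)), tsum_congr hfst, hπ]
  have hsupp (k : T × T → ℝ≥0∞) : ∑' x : Function.support g, g x * k x = ∑' x, g x * k x :=
    tsum_subtype_eq_of_support_subset (f := fun x => g x * k x)
      (Function.support_mul_subset_left _ _)
  refine Lift.of_countable_index (fun x : Function.support g => g x) (fun x => (x : T × T).1)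
    (fun x => (x : T × T).2) (fun x => ⟨pos_iff_ne_zero.2 x.2, hg1 ▸ ENNReal.le_tsum _⟩)
    ((tsum_subtype_support g).trans hg1) (fun x => hgR x x.2) (fun u => ?_) (fun u => ?_)
  · rw [hsupp fun x => dirac x.1 u, tsum_mul_dirac_fst, hfst]
  · rw [hsupp fun x => dirac x.2 u, tsum_mul_dirac_snd, hsnd]

section ClassCoupling

variable {T : Type*} (R : T → T → Prop) (π π' : T → ℝ≥0∞)

noncomputable def classMass (u : T) : ℝ≥0∞ := ∑' t : {t // R u t}, π t

noncomputable def classCoupling (x : T × T) : ℝ≥0∞ :=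
  if R x.1 x.2 then π x.1 * π' x.2 / classMass R π x.1 else 0

variable {R π π'}

theorem le_classMass {u : T} (hu : R u u) : π u ≤ classMass R π u :=
  ENNReal.le_tsum (⟨u, hu⟩ : {t // R u t})

theorem classMass_le_tsum (u : T) : classMass R π u ≤ ∑' t, π t :=
  ENNReal.tsum_comp_le_tsum_of_injective Subtype.val_injective π

theorem classMass_congr (hR : Equivalence R) {a b : T} (hab : R a b) :
    classMass R π a = classMass R π b := by
  have hclass : R a = R b := funext fun t => propext ⟨hR.trans (hR.symm hab), hR.trans hab⟩
  simp only [classMass, tsum_subtype_eq_tsum_ite, hclass]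

theorem tsum_classCoupling_fst {u : T} (hu : R u u)
    (hmass : classMass R π' u = classMass R π u) (htop : classMass R π u ≠ ⊤) :
    ∑' v, classCoupling R π π' (u, v) = π u := by
  calc ∑' v, classCoupling R π π' (u, v)
      = ∑' v : {v // R u v}, π u / classMass R π u * π' v := by
        rw [tsum_subtype_eq_tsum_ite (R u) fun v => π u / classMass R π u * π' v]
        refine tsum_congr fun v => ?_
        simp only [classCoupling, ENNReal.mul_div_right_comm]
    _ = π u / classMass R π u * classMass R π u := by rw [ENNReal.tsum_mul_left, ← hmass]; rfl
    _ = π u := ENNReal.div_mul_cancel'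
        (fun h0 => le_antisymm (h0 ▸ le_classMass hu) zero_le) (absurd · htop)

theorem rel_of_classCoupling_ne_zero {x : T × T} (hx : classCoupling R π π' x ≠ 0) :
    R x.1 x.2 :=
  of_not_not fun h => hx (if_neg h)

theorem classCoupling_swap (hR : Equivalence R) (hmass : ∀ u, classMass R π u = classMass R π' u)
    (u v : T) : classCoupling R π π' (u, v) = classCoupling R π' π (v, u) := by
  by_cases huv : R u v
  · simp only [classCoupling, if_pos huv, if_pos (hR.symm huv), classMass_congr hR huv, hmass,
      mul_comm]
  · simp only [classCoupling, if_neg huv, if_neg (mt hR.symm huv)]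

end ClassCoupling

theorem lift_equivalence_iff_class_masses_general {T : Type*} [Countable T]
    (R : T → T → Prop) (hR : Equivalence R)
    (π π' : T → ℝ≥0∞) (hπ : ∑' t, π t = 1) :
    Lift R π π' ↔ ∀ s : T, (∑' t : {t : T // R s t}, π (t : T)) = ∑' t : {t : T // R s t}, π' (t : T) := by
  refine ⟨fun h s => h.tsum_subtype_eq (R s) fun a b hab =>
    ⟨fun h => hR.trans h hab, fun h => hR.trans h (hR.symm hab)⟩, fun hmass => ?_⟩
  have htop (u : T) : classMass R π u ≠ ⊤ :=
    ((classMass_le_tsum u).trans_eq hπ).trans_lt ENNReal.one_lt_top |>.ne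
  refine Lift.of_coupling (classCoupling R π π') (fun _ => rel_of_classCoupling_ne_zero)
    (fun u => tsum_classCoupling_fst (hR.refl u) (hmass u).symm (htop u)) (fun v => ?_) hπ
  simp only [classCoupling_swap hR hmass]
  exact tsum_classCoupling_fst (hR.refl v) (hmass v) ((hmass v).symm.trans_ne (htop v))

/-- For an equivalence relation `R` on a countable set `T`, two distributions are related
by the lifting `R†` if and only if they assign the same mass to every equivalence class. -/
theorem lift_equivalence_iff_class_masses {T : Type*} [Countable T]
    (R : T → T → Prop) (hR : Equivalence R)
    (π π' : T → ℝ≥0∞) (hπ : ∑' t, π t = 1) (hπ' : ∑' t, π' t = 1) :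
    Lift R π π' ↔ ∀ s : T, (∑' t : {t : T // R s t}, π (t : T)) = ∑' t : {t : T // R s t}, π' (t : T) :=
  lift_equivalence_iff_class_masses_general R hR π π' hπ
end

section
/- If R and S are relations on a countable set T, then the lifting of their composition contains the composition of their liftings: if π R† ρ and ρ S† π', then π (R∘S)† π', where (R∘S) = {(s,u) : ∃t, s R t ∧ t S u}. -/
open scoped ENNReal Classical

/-! Glue the two decompositions along the middle distribution `ρ`.
If `π = ∑ᵢ pᵢ δ_{sᵢ}`, `ρ = ∑ᵢ pᵢ δ_{tᵢ} = ∑ⱼ qⱼ δ_{s'ⱼ}` and `π' = ∑ⱼ qⱼ δ_{t'ⱼ}`, give the pair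
`(i, j)` the weight `pᵢ qⱼ [tᵢ = s'ⱼ] / ρ(tᵢ)`. Summing over `j` gives back `pᵢ` and summing
over `i` gives back `qⱼ`, so these weights decompose `π` and `π'`, and every pair of positive
weight has `sᵢ R tᵢ = s'ⱼ S t'ⱼ`. -/

section Dirac

variable {T : Type*}

lemma dirac_comm (a b : T) : dirac a b = dirac b a := by
  simp only [dirac, eq_comm]

lemma eq_of_dirac_ne_zero {a b : T} (h : dirac a b ≠ 0) : b = a := by
  by_contra hba
  exact h (if_neg hba)

lemma dirac_mul_apply_comm (a b : T) (f : T → ℝ≥0∞) : dirac a b * f a = dirac a b * f b := by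
  by_cases hba : b = a
  · rw [hba]
  · simp [dirac, hba]

variable {I : Type*} (p : I → ℝ≥0∞) (t : I → T)

lemma le_tsum_mul_dirac (i : I) : p i ≤ ∑' i', p i' * dirac (t i') (t i) := by
  simpa [dirac] using ENNReal.le_tsum (f := fun i' => p i' * dirac (t i') (t i)) i

lemma tsum_mul_dirac_le (u : T) : ∑' i, p i * dirac (t i) u ≤ ∑' i, p i :=
  ENNReal.tsum_le_tsum fun i => mul_le_of_le_one_right' (by unfold dirac; split_ifs <;> simp)

end Dirac

lemma lift_of_tsum_eq_one {T : Type*} {I : Type} [Countable I] {R : T → T → Prop}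
    {π π' : T → ℝ≥0∞} (p : I → ℝ≥0∞) (s t : I → T) (hp : ∑' i, p i = 1)
    (hR : ∀ i, p i ≠ 0 → R (s i) (t i))
    (hπ : ∀ u, π u = ∑' i, p i * dirac (s i) u) (hπ' : ∀ u, π' u = ∑' i, p i * dirac (t i) u) :
    Lift R π π' := by
  have restrict (a : I → T) (u : T) :
      ∑' i : Function.support p, p i * dirac (a i) u = ∑' i, p i * dirac (a i) u :=
    tsum_subtype_eq_of_support_subset (f := fun i => p i * dirac (a i) u)
      (Function.support_mul_subset_left _ _)
  refine ⟨Function.support p, inferInstance, fun i => p i, fun i => s i, fun i => t i,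
    fun i => ⟨pos_iff_ne_zero.2 i.2, hp ▸ ENNReal.le_tsum (i : I)⟩,
    by rw [tsum_subtype_support, hp], fun i => hR i i.2,
    fun u => by rw [hπ, restrict], fun u => by rw [hπ', restrict]⟩

section Gluing

variable {T I J : Type*} {ρ : T → ℝ≥0∞} {p : I → ℝ≥0∞} {q : J → ℝ≥0∞} {t : I → T} {s : J → T}

lemma ENNReal.tsum_prod_mul_fst {w : I × J → ℝ≥0∞} (hw : ∀ i, ∑' j, w (i, j) = p i)
    (f : I → ℝ≥0∞) : ∑' ij, w ij * f ij.1 = ∑' i, p i * f i := by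
  simp only [ENNReal.tsum_prod', ENNReal.tsum_mul_right, hw]

lemma ENNReal.tsum_prod_mul_snd {w : I × J → ℝ≥0∞} (hw : ∀ j, ∑' i, w (i, j) = q j)
    (f : J → ℝ≥0∞) : ∑' ij, w ij * f ij.2 = ∑' j, q j * f j := by
  simp only [ENNReal.tsum_prod', ENNReal.tsum_comm (α := I), ENNReal.tsum_mul_right, hw]

variable (ρ p q t s) in
noncomputable def glueWeight (ij : I × J) : ℝ≥0∞ :=
  p ij.1 * q ij.2 * dirac (t ij.1) (s ij.2) / ρ (t ij.1)

lemma eq_of_glueWeight_ne_zero {ij : I × J} (h : glueWeight ρ p q t s ij ≠ 0) :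
    s ij.2 = t ij.1 :=
  eq_of_dirac_ne_zero (right_ne_zero_of_mul (left_ne_zero_of_mul h))

variable (hρp : ∀ u, ρ u = ∑' i, p i * dirac (t i) u) (hρq : ∀ u, ρ u = ∑' j, q j * dirac (s j) u)
  (hρ : ∀ u, ρ u ≠ ⊤)
include hρp hρq hρ

lemma glueWeight_marginal_fst (i : I) : ∑' j, glueWeight ρ p q t s (i, j) = p i := by
  have hpρ : p i ≤ ρ (t i) := hρp (t i) ▸ le_tsum_mul_dirac p t i
  calc ∑' j, glueWeight ρ p q t s (i, j)
      = ∑' j, p i * (q j * dirac (s j) (t i)) * (ρ (t i))⁻¹ := tsum_congr fun j => by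
        rw [glueWeight, div_eq_mul_inv, dirac_comm]
        ring
    _ = p i * ρ (t i) / ρ (t i) := by
        rw [ENNReal.tsum_mul_right, ENNReal.tsum_mul_left, ← hρq, div_eq_mul_inv]
    _ = p i := by
        rw [ENNReal.mul_div_cancel_right' (fun h => nonpos_iff_eq_zero.1 (h ▸ hpρ))
          (fun h => absurd h (hρ _))]

lemma glueWeight_marginal_snd (j : J) : ∑' i, glueWeight ρ p q t s (i, j) = q j := by
  have hqρ : q j ≤ ρ (s j) := hρq (s j) ▸ le_tsum_mul_dirac q s j
  calc ∑' i, glueWeight ρ p q t s (i, j)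
      = ∑' i, q j * (p i * dirac (t i) (s j)) * (ρ (s j))⁻¹ := tsum_congr fun i => by
        rw [glueWeight, div_eq_mul_inv, mul_assoc _ (dirac _ _),
          dirac_mul_apply_comm _ _ fun u => (ρ u)⁻¹]
        ring
    _ = q j * ρ (s j) / ρ (s j) := by
        rw [ENNReal.tsum_mul_right, ENNReal.tsum_mul_left, ← hρp, div_eq_mul_inv]
    _ = q j := by
        rw [ENNReal.mul_div_cancel_right' (fun h => nonpos_iff_eq_zero.1 (h ▸ hqρ))
          (fun h => absurd h (hρ _))]

end Gluing

theorem lift_comp_general {T : Type*} (R S : T → T → Prop)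
    (π ρ π' : T → ℝ≥0∞) (hR : Lift R π ρ) (hS : Lift S ρ π') :
    Lift (fun s u => ∃ t, R s t ∧ S t u) π π' := by
  obtain ⟨I, _, p, s, t, -, hp, hRst, hπ, hρp⟩ := hR
  obtain ⟨J, _, q, s', t', -, -, hSst, hρq, hπ'⟩ := hS
  have hρ : ∀ u, ρ u ≠ ⊤ := fun u =>
    ne_top_of_le_ne_top ENNReal.one_ne_top (hp ▸ hρp u ▸ tsum_mul_dirac_le p t u)
  have hfst := glueWeight_marginal_fst hρp hρq hρ
  have hsnd := glueWeight_marginal_snd hρp hρq hρ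
  refine lift_of_tsum_eq_one (glueWeight ρ p q t s') (fun ij => s ij.1) (fun ij => t' ij.2)
    ?_ ?_ ?_ ?_
  · simpa [hp] using ENNReal.tsum_prod_mul_fst hfst 1
  · rintro ⟨i, j⟩ hij
    exact ⟨t i, hRst i, eq_of_glueWeight_ne_zero hij ▸ hSst j⟩
  · intro u
    rw [hπ, ENNReal.tsum_prod_mul_fst hfst fun i => dirac (s i) u]
  · intro u
    rw [hπ', ENNReal.tsum_prod_mul_snd hsnd fun j => dirac (t' j) u]

/-- The lifting of the composition of two relations contains the composition of their
liftings: if `π R† ρ` and `ρ S† π'` then `π (R∘S)† π'`. -/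
theorem lift_comp {T : Type*} [Countable T] (R S : T → T → Prop)
    (π ρ π' : T → ℝ≥0∞) (hR : Lift R π ρ) (hS : Lift S ρ π') :
    Lift (fun s u => ∃ t, R s t ∧ S t u) π π' :=
  lift_comp_general R S π ρ π' hR hS
end
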